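/- Let k ≥ 2, let 0 ≤ ε < 1/2, and let P_0, P_1, …, P_k be probability distributions on a finite set such that d_TV(P_i, P_{i'}) ≥ 1 − 2ε for all distinct i, i' ∈ {1,…,k}. Then there exists a subset S ⊆ {1,…,k} with |S| = k − 1 such that H²(P_0, P_i) ≥ (1−2ε)²/8 for every i ∈ S. In particular, ∑_{i=1}^k H²(P_0, P_i) ≥ (k−1)·(1−2ε)²/8. -/

import Mathlib

open Finset

noncomputable section

/-- `p` is a probability distribution on the finite set `Ω`. -/
def IsDist {Ω : Type*} [Fintype Ω] (p : Ω → ℝ) : Prop :=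
  (∀ x, 0 ≤ p x) ∧ ∑ x, p x = 1

/-- Squared Hellinger distance between two distributions on a finite set. -/
def hellSq {Ω : Type*} [Fintype Ω] (p q : Ω → ℝ) : ℝ :=
  (1/2) * ∑ x, (Real.sqrt (p x) - Real.sqrt (q x))^2

/-- Total variation distance between two distributions on a finite set. -/
def tvDist {Ω : Type*} [Fintype Ω] (p q : Ω → ℝ) : ℝ :=
  (1/2) * ∑ x, |p x - q x|

/-!
By the Cauchy–Schwarz inequality `d_TV² ≤ 2 H²`, so a distribution within squared Hellinger
distance `(1 - 2ε)² / 8` of `P₀` is within total variation distance `(1 - 2ε) / 2` of it.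
Two such `Pᵢ` would be closer than `1 - 2ε` to each other by the triangle inequality, so at most
one index is Hellinger-close to `P₀`; the remaining `k - 1` give the sum bound.
-/

section Distances

variable {Ω : Type*} [Fintype Ω]

lemma hellSq_nonneg (p q : Ω → ℝ) : 0 ≤ hellSq p q := by
  unfold hellSq; positivity

lemma tvDist_comm (p q : Ω → ℝ) : tvDist p q = tvDist q p := by
  simp only [tvDist, abs_sub_comm]

lemma tvDist_triangle (p q r : Ω → ℝ) : tvDist p r ≤ tvDist p q + tvDist q r := by
  simp only [tvDist, ← mul_add, ← sum_add_distrib]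
  gcongr with x
  exact abs_sub_le _ _ _

/-- Writing `|p - q| = |√p - √q| (√p + √q)`, this is Cauchy–Schwarz together with
`(√p + √q)² ≤ 2 (p + q)`. -/
lemma sq_tvDist_le_hellSq_mul {p q : Ω → ℝ} (hp : ∀ x, 0 ≤ p x) (hq : ∀ x, 0 ≤ q x) :
    tvDist p q ^ 2 ≤ hellSq p q * (∑ x, p x + ∑ x, q x) := by
  set a : Ω → ℝ := fun x => Real.sqrt (p x)
  set b : Ω → ℝ := fun x => Real.sqrt (q x)
  have hpa (x : Ω) : a x ^ 2 = p x := Real.sq_sqrt (hp x)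
  have hqb (x : Ω) : b x ^ 2 = q x := Real.sq_sqrt (hq x)
  have habs (x : Ω) : |p x - q x| = |a x - b x| * (a x + b x) := by
    have : 0 ≤ a x + b x := by positivity
    rw [← hpa x, ← hqb x, sq_sub_sq, abs_mul, abs_of_nonneg this, mul_comm]
  have hCS : (∑ x, |a x - b x| * (a x + b x)) ^ 2 ≤
      (∑ x, (a x - b x) ^ 2) * ∑ x, (a x + b x) ^ 2 := by
    simpa only [sq_abs] using
      sum_mul_sq_le_sq_mul_sq univ (fun x => |a x - b x|) fun x => a x + b x
  have hsum : ∑ x, (a x + b x) ^ 2 ≤ 2 * (∑ x, p x + ∑ x, q x) := by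
    rw [← sum_add_distrib, mul_sum]
    gcongr with x
    rw [← hpa x, ← hqb x]
    nlinarith [sq_nonneg (a x - b x)]
  have htv : tvDist p q = (1/2) * ∑ x, |a x - b x| * (a x + b x) := by
    simp only [tvDist, habs]
  have hh : ∑ x, (a x - b x) ^ 2 = 2 * hellSq p q := by
    simp only [hellSq, a, b]; ring
  have hH : 0 ≤ 2 * hellSq p q := by linarith [hellSq_nonneg p q]
  rw [htv]
  rw [hh] at hCS
  nlinarith [mul_le_mul_of_nonneg_left hsum hH]

lemma sq_tvDist_le_two_mul_hellSq {p q : Ω → ℝ} (hp : IsDist p) (hq : IsDist q) :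
    tvDist p q ^ 2 ≤ 2 * hellSq p q := by
  have h := sq_tvDist_le_hellSq_mul hp.1 hq.1
  rw [hp.2, hq.2] at h
  linarith

lemma tvDist_lt_of_hellSq_lt {p q : Ω → ℝ} (hp : IsDist p) (hq : IsDist q) {δ : ℝ}
    (hδ : 0 ≤ δ) (h : hellSq p q < δ ^ 2 / 8) : tvDist p q < δ / 2 := by
  refine lt_of_pow_lt_pow_left₀ 2 (by positivity) ?_
  linarith [sq_tvDist_le_two_mul_hellSq hp hq]

lemma tvDist_lt_of_hellSq_lt_of_hellSq_lt {p q r : Ω → ℝ} (hp : IsDist p) (hq : IsDist q)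
    (hr : IsDist r) {δ : ℝ} (hδ : 0 ≤ δ) (hpq : hellSq p q < δ ^ 2 / 8)
    (hpr : hellSq p r < δ ^ 2 / 8) : tvDist q r < δ := by
  have hqp := tvDist_lt_of_hellSq_lt hp hq hδ hpq
  have hpr' := tvDist_lt_of_hellSq_lt hp hr hδ hpr
  rw [tvDist_comm] at hqp
  linarith [tvDist_triangle q p r]

end Distances

lemma Finset.exists_card_eq_card_sub_one_forall {ι : Type*} [Fintype ι] (Q : ι → Prop)
    (hQ : ∀ i j, ¬ Q i → ¬ Q j → i = j) :
    ∃ S : Finset ι, S.card = Fintype.card ι - 1 ∧ ∀ i ∈ S, Q i := by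
  classical
  have hbad : (univ.filter fun i => ¬ Q i).card ≤ 1 :=
    card_le_one.2 fun i hi j hj => hQ i j (mem_filter.1 hi).2 (mem_filter.1 hj).2
  have hgood : Fintype.card ι - 1 ≤ (univ.filter Q).card := by
    have := card_filter_add_card_filter_not (s := univ) Q
    rw [card_univ] at this
    omega
  obtain ⟨S, hSQ, hScard⟩ := exists_subset_card_eq hgood
  exact ⟨S, hScard, fun i hi => (mem_filter.1 (hSQ hi)).2⟩

theorem statement11 (k : ℕ) (hk : 2 ≤ k) (ε : ℝ) (hε : ε < 1/2)
    (β : Type) [Fintype β] (P₀ : β → ℝ) (P : Fin k → β → ℝ)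
    (hP₀ : IsDist P₀) (hP : ∀ i, IsDist (P i))
    (hTV : ∀ i i' : Fin k, i ≠ i' → 1 - 2*ε ≤ tvDist (P i) (P i')) :
    (∃ S : Finset (Fin k), S.card = k - 1 ∧
      ∀ i ∈ S, (1 - 2*ε)^2 / 8 ≤ hellSq P₀ (P i)) ∧
    ((k : ℝ) - 1) * (1 - 2*ε)^2 / 8 ≤ ∑ i, hellSq P₀ (P i) := by
  have hδ : 0 ≤ 1 - 2*ε := by linarith
  obtain ⟨S, hScard, hS⟩ := exists_card_eq_card_sub_one_forall
    (fun i => (1 - 2*ε)^2 / 8 ≤ hellSq P₀ (P i)) fun i j hi hj => by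
      by_contra hij
      have := tvDist_lt_of_hellSq_lt_of_hellSq_lt hP₀ (hP i) (hP j) hδ
        (not_le.1 hi) (not_le.1 hj)
      linarith [hTV i j hij]
  rw [Fintype.card_fin] at hScard
  refine ⟨⟨S, hScard, hS⟩, ?_⟩
  calc ((k : ℝ) - 1) * (1 - 2*ε)^2 / 8 = S.card • ((1 - 2*ε)^2 / 8) := by
        rw [hScard, nsmul_eq_mul, Nat.cast_pred (by omega)]; ring
    _ ≤ ∑ i ∈ S, hellSq P₀ (P i) := card_nsmul_le_sum S _ _ hS
    _ ≤ ∑ i, hellSq P₀ (P i) :=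
        sum_le_sum_of_subset_of_nonneg (subset_univ S) fun i _ _ => hellSq_nonneg _ _
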